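/- Let m ≡ 1 (mod 6) with m ≥ 7, n = 2^m − 1, and v = 2^{(m−1)/2} − 1. Then for every integer a with 2^{m−1} + 2^{(m−1)/2} + 1 ≤ a ≤ 2^{m−1} + 2^{(m−1)/2} + 2^{(m−3)/2} + 1, the binary weight of (a·v mod n) is congruent to 2 modulo 3. -/

import Mathlib

/-!
Write `m = 2j + 3` with `j ≡ 2 (mod 3)`, `q = 2^j` and `a = 2^(m-1) + 2^(j+1) + 1 + b` with
`0 ≤ b ≤ q`. Then `a·v ≡ (q - 1) + b(2q - 1) (mod n)`, and this representative is already
reduced. For `b < q` it equals `(q - 1 - b) + 2^(j+1)·b`, two non-overlapping blocks of bits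
in which `q - 1 - b` is the `j`-bit complement of `b`, so its weight is `j`; for `b = q` it is
`2^(2j+1) - 1`, of weight `2j + 1`. Both are `≡ 2 (mod 3)`.
-/

def w2 (x : ℕ) : ℕ := (Nat.digits 2 x).sum

lemma w2_of_lt_two {r : ℕ} (hr : r < 2) : w2 r = r := by
  interval_cases r <;> rfl

lemma w2_add_two_pow_mul {k a : ℕ} (c : ℕ) (ha : a < 2 ^ k) :
    w2 (a + 2 ^ k * c) = w2 a + w2 c := by
  rcases Nat.eq_zero_or_pos c with rfl | hc
  · simp [w2]
  have hlen : (Nat.digits 2 a).length ≤ k := (Nat.digits_length_le_iff (by norm_num) a).2 ha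
  have hdigits := Nat.digits_append_zeroes_append_digits
    (k := k - (Nat.digits 2 a).length) (n := a) (by norm_num : 1 < 2) hc
  rw [Nat.add_sub_cancel' hlen] at hdigits
  simp [w2, ← hdigits]

lemma w2_add_w2_two_pow_sub_one_sub {j b : ℕ} (hb : b < 2 ^ j) :
    w2 b + w2 (2 ^ j - 1 - b) = j := by
  induction j generalizing b with
  | zero => simp [Nat.lt_one_iff.1 hb, w2]
  | succ j ih =>
    rw [pow_succ] at hb
    have hlow : w2 b = b % 2 + w2 (b / 2) := by
      conv_lhs => rw [show b = b % 2 + 2 ^ 1 * (b / 2) by omega]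
      rw [w2_add_two_pow_mul _ (by omega), w2_of_lt_two (by omega)]
    have hhigh : w2 (2 ^ (j + 1) - 1 - b) = (1 - b % 2) + w2 (2 ^ j - 1 - b / 2) := by
      rw [show 2 ^ (j + 1) - 1 - b = (1 - b % 2) + 2 ^ 1 * (2 ^ j - 1 - b / 2) by
        rw [pow_succ]; omega, w2_add_two_pow_mul _ (by omega), w2_of_lt_two (by omega)]
    have := ih (b := b / 2) (by omega)
    omega

lemma w2_two_pow_sub_one (j : ℕ) : w2 (2 ^ j - 1) = j := by
  simpa [w2] using w2_add_w2_two_pow_sub_one_sub (Nat.two_pow_pos j)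

lemma mul_mod_two_pow_sub_one_eq (j b : ℕ) (hb : b ≤ 2 ^ j) :
    (2 ^ (2 * j + 2) + 2 ^ (j + 1) + 1 + b) * (2 ^ (j + 1) - 1) % (2 ^ (2 * j + 3) - 1)
      = 2 ^ j - 1 + b * (2 ^ (j + 1) - 1) := by
  set q := 2 ^ j with hq
  have hq1 : 1 ≤ q := Nat.one_le_two_pow
  have h2 : 2 ^ (j + 1) = 2 * q := by rw [pow_succ]; ring
  have h4 : 2 ^ (2 * j + 2) = 4 * q ^ 2 := by rw [hq]; ring
  have h8 : 2 ^ (2 * j + 3) = 8 * q ^ 2 := by rw [hq]; ring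
  have hq2 : 1 ≤ q ^ 2 := Nat.one_le_pow _ _ hq1
  rw [h2, h4, h8]
  have hprod : (4 * q ^ 2 + 2 * q + 1 + b) * (2 * q - 1)
      = (8 * q ^ 2 - 1) * q + (q - 1 + b * (2 * q - 1)) := by
    zify [hq1, hq2, show 1 ≤ 2 * q by omega, show 1 ≤ 8 * q ^ 2 by omega]
    ring
  have hlt : q - 1 + b * (2 * q - 1) < 8 * q ^ 2 - 1 := by
    have : b * (2 * q - 1) ≤ q * (2 * q - 1) := Nat.mul_le_mul_right _ hb
    have : q * (2 * q - 1) + q = 2 * q ^ 2 := by zify [show 1 ≤ 2 * q by omega]; ring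
    omega
  rw [hprod, Nat.mul_add_mod, Nat.mod_eq_of_lt hlt]

lemma w2_residue_of_lt {j b : ℕ} (hb : b < 2 ^ j) :
    w2 (2 ^ j - 1 + b * (2 ^ (j + 1) - 1)) = j := by
  have hsplit : 2 ^ j - 1 + b * (2 ^ (j + 1) - 1) = (2 ^ j - 1 - b) + 2 ^ (j + 1) * b := by
    rw [pow_succ]
    zify [Nat.one_le_two_pow, show 1 ≤ 2 ^ j * 2 by omega, show b ≤ 2 ^ j - 1 by omega]
    ring
  rw [hsplit, w2_add_two_pow_mul _ (by rw [pow_succ]; omega)]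
  have := w2_add_w2_two_pow_sub_one_sub hb
  omega

lemma w2_residue_self (j : ℕ) :
    w2 (2 ^ j - 1 + 2 ^ j * (2 ^ (j + 1) - 1)) = 2 * j + 1 := by
  have hmerge : 2 ^ j - 1 + 2 ^ j * (2 ^ (j + 1) - 1) = 2 ^ (2 * j + 1) - 1 := by
    rw [show 2 ^ (2 * j + 1) = 2 ^ j * (2 ^ j * 2) by ring, pow_succ]
    obtain ⟨q, hq⟩ : ∃ q, 2 ^ j = q + 1 := ⟨2 ^ j - 1, by have := Nat.one_le_two_pow (n := j); omega⟩
    rw [hq, Nat.add_sub_cancel, show (q + 1) * 2 - 1 = 2 * q + 1 by omega]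
    exact (Nat.sub_eq_of_eq_add (by ring)).symm
  rw [hmerge, w2_two_pow_sub_one]

theorem stmt5 (m : ℕ) (hm : m % 6 = 1) (hm7 : 7 ≤ m)
    (n v : ℕ) (hn : n = 2 ^ m - 1) (hv : v = 2 ^ ((m - 1) / 2) - 1) :
    ∀ a : ℕ, 2 ^ (m - 1) + 2 ^ ((m - 1) / 2) + 1 ≤ a →
      a ≤ 2 ^ (m - 1) + 2 ^ ((m - 1) / 2) + 2 ^ ((m - 3) / 2) + 1 →
      w2 (a * v % n) % 3 = 2 := by
  intro a ha₁ ha₂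
  obtain ⟨j, rfl, hj⟩ : ∃ j, m = 2 * j + 3 ∧ j % 3 = 2 := ⟨(m - 3) / 2, by omega, by omega⟩
  simp only [show 2 * j + 3 - 1 = 2 * j + 2 by omega, show (2 * j + 2) / 2 = j + 1 by omega,
    show (2 * j + 3 - 3) / 2 = j by omega] at ha₁ ha₂ hv
  obtain ⟨b, rfl⟩ : ∃ b, a = 2 ^ (2 * j + 2) + 2 ^ (j + 1) + 1 + b :=
    ⟨a - (2 ^ (2 * j + 2) + 2 ^ (j + 1) + 1), by omega⟩
  rw [hn, hv, mul_mod_two_pow_sub_one_eq j b (by omega)]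
  rcases (by omega : b < 2 ^ j ∨ b = 2 ^ j) with hb | rfl
  · rw [w2_residue_of_lt hb]; omega
  · rw [w2_residue_self]; omega
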